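/- arXiv:0704.2152 — 2 statements merged into one kernel-verified Lean document; each statement's English description precedes it below -/
import Mathlib

section
/- Let 𝒰₀ be the future in Minkowski 3-space of the segment I = [0, α₀v₀], where v₀ is a unit spacelike vector and α₀ > 0. Then 𝒰₀ has cosmological time T, which is C¹, and for every p ∈ 𝒰₀ there is a unique point r(p) ∈ I realizing T(p), namely T(p) = sup_{q ∈ I} (-⟨p-q, p-q⟩)^{1/2} over the points q with p - q future timelike, and the retraction r : 𝒰₀ → I is continuous. -/
noncomputable section

/-- The Minkowski bilinear form on `ℝ³` with signature `(-,+,+)`. -/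
def eta (x y : Fin 3 → ℝ) : ℝ := -(x 0 * y 0) + x 1 * y 1 + x 2 * y 2

/-- The segment `I = [0, α₀ v₀]`. -/
def seg (α₀ : ℝ) (v₀ : Fin 3 → ℝ) : Set (Fin 3 → ℝ) := segment ℝ 0 (α₀ • v₀)

/-- The future `𝒰₀ = I⁺([0, α₀ v₀])` of the segment. -/
def U0 (α₀ : ℝ) (v₀ : Fin 3 → ℝ) : Set (Fin 3 → ℝ) :=
  {p | ∃ q ∈ seg α₀ v₀, eta (p - q) (p - q) < 0 ∧ 0 < (p - q) 0}

/-- The cosmological time of `𝒰₀`: the supremum of Lorentzian distances from points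
of the segment lying in the past of `p`. -/
def cosmoT (α₀ : ℝ) (v₀ : Fin 3 → ℝ) (p : Fin 3 → ℝ) : ℝ :=
  sSup {L : ℝ | ∃ q ∈ seg α₀ v₀, eta (p - q) (p - q) < 0 ∧ 0 < (p - q) 0 ∧
    L = Real.sqrt (-(eta (p - q) (p - q)))}

/-- positive-part square -/
def sqp (x : ℝ) : ℝ := (max x 0) ^ 2

lemma hasDerivAt_sqp (x : ℝ) : HasDerivAt sqp (2 * max x 0) x := by
  rcases lt_trichotomy x 0 with h | h | h
  · have he : sqp =ᶠ[nhds x] fun _ => (0 : ℝ) := by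
      filter_upwards [Iio_mem_nhds h] with y hy
      simp [sqp, max_eq_right (Set.mem_Iio.mp hy).le]
    have h0 : HasDerivAt (fun _ : ℝ => (0 : ℝ)) 0 x := hasDerivAt_const x 0
    have := h0.congr_of_eventuallyEq he
    simpa [max_eq_right h.le] using this
  · subst h
    rw [hasDerivAt_iff_isLittleO, Asymptotics.isLittleO_iff]
    intro c hc
    filter_upwards [Metric.ball_mem_nhds (0:ℝ) hc] with y hy
    have hy' : |y| < c := by simpa [Real.dist_eq] using hy
    have h2 : 0 ≤ sqp y := by simp only [sqp]; positivity
    have h1 : sqp y ≤ |y| * |y| := by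
      rw [abs_mul_abs_self]
      rcases le_total y 0 with h | h
      · simp only [sqp, max_eq_right h]
        nlinarith
      · simp only [sqp, max_eq_left h]
        nlinarith
    have hs0 : sqp 0 = 0 := by simp [sqp]
    simp only [hs0, max_self, mul_zero, smul_eq_mul, sub_zero]
    rw [Real.norm_eq_abs, Real.norm_eq_abs, abs_of_nonneg h2]
    calc sqp y ≤ |y| * |y| := h1
    _ ≤ c * |y| := by nlinarith [abs_nonneg y]
  · have he : sqp =ᶠ[nhds x] fun y => y ^ 2 := by
      filter_upwards [Ioi_mem_nhds h] with y hy
      simp [sqp, max_eq_left (Set.mem_Ioi.mp hy).le]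
    have h0 : HasDerivAt (fun y : ℝ => y ^ 2) (2 * x) x := by
      simpa using (hasDerivAt_pow 2 x)
    have := h0.congr_of_eventuallyEq he
    simpa [max_eq_left h.le] using this

lemma contDiff_sqp : ContDiff ℝ 1 sqp := by
  rw [contDiff_one_iff_deriv]
  constructor
  · exact fun x => (hasDerivAt_sqp x).differentiableAt
  · have : deriv sqp = fun x => 2 * max x 0 := funext fun x => (hasDerivAt_sqp x).deriv
    rw [this]
    exact continuous_const.mul (continuous_id.max continuous_const)

lemma mem_seg_iff {α₀ : ℝ} (hα : 0 < α₀) {v₀ q : Fin 3 → ℝ} :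
    q ∈ seg α₀ v₀ ↔ ∃ t, 0 ≤ t ∧ t ≤ α₀ ∧ q = t • v₀ := by
  rw [seg, segment_eq_image]
  constructor
  · rintro ⟨θ, ⟨h0, h1⟩, rfl⟩
    exact ⟨θ * α₀, by positivity, by nlinarith, by simp [smul_smul]⟩
  · rintro ⟨t, h0, h1, rfl⟩
    refine ⟨t / α₀, ⟨by positivity, by rw [div_le_one hα]; exact h1⟩, ?_⟩
    simp [smul_smul, div_mul_cancel₀ t hα.ne']

lemma eta_sub_smul (p v : Fin 3 → ℝ) (t : ℝ) :
    eta (p - t • v) (p - t • v) = eta p p - 2*t*(eta p v) + t^2*(eta v v) := by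
  simp only [eta, Pi.sub_apply, Pi.smul_apply, smul_eq_mul]
  ring

lemma future_aux {u w : Fin 3 → ℝ} (hu : eta u u < 0) (hu0 : 0 < u 0)
    (hw : eta w w < 0) (hsp : 0 ≤ eta (u - w) (u - w)) : 0 < w 0 := by
  simp only [eta, Pi.sub_apply] at hu hw hsp
  by_contra h
  push_neg at h
  nlinarith [sq_nonneg (u 1 * w 2 - u 2 * w 1), sq_nonneg (u 1 * w 1 + u 2 * w 2),
    mul_nonneg (le_of_lt hu0) (neg_nonneg.mpr h), sq_nonneg (u 0 + w 0), sq_nonneg (u 0 - w 0)]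

lemma clamp_cases {α₀ : ℝ} (hα : 0 < α₀) (b : ℝ) :
    (b ≤ 0 ∧ max 0 (min α₀ b) = 0) ∨ (0 ≤ b ∧ b ≤ α₀ ∧ max 0 (min α₀ b) = b) ∨
    (α₀ ≤ b ∧ max 0 (min α₀ b) = α₀) := by
  rcases le_total b 0 with h | h
  · exact Or.inl ⟨h, by rw [min_eq_right (h.trans hα.le), max_eq_left h]⟩
  · rcases le_total b α₀ with h' | h'
    · exact Or.inr (Or.inl ⟨h, h', by rw [min_eq_right h', max_eq_right h]⟩)
    · exact Or.inr (Or.inr ⟨h', by rw [min_eq_left h', max_eq_right hα.le]⟩)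

lemma key {α₀ : ℝ} (hα : 0 < α₀) {v₀ : Fin 3 → ℝ} (hv : eta v₀ v₀ = 1)
    {p : Fin 3 → ℝ} (hp : p ∈ U0 α₀ v₀) :
    eta (p - (max 0 (min α₀ (eta p v₀))) • v₀) (p - (max 0 (min α₀ (eta p v₀))) • v₀) < 0 ∧
    0 < (p - (max 0 (min α₀ (eta p v₀))) • v₀) 0 ∧
    cosmoT α₀ v₀ p =
      Real.sqrt (-(eta (p - (max 0 (min α₀ (eta p v₀))) • v₀)
        (p - (max 0 (min α₀ (eta p v₀))) • v₀))) ∧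
    ∀ t, 0 ≤ t → t ≤ α₀ → eta (p - t • v₀) (p - t • v₀) < 0 → 0 < (p - t • v₀) 0 →
      Real.sqrt (-(eta (p - t • v₀) (p - t • v₀))) = cosmoT α₀ v₀ p →
      t = max 0 (min α₀ (eta p v₀)) := by
  set b := eta p v₀ with hb
  set c := max 0 (min α₀ b) with hc
  have hc0 : 0 ≤ c := le_max_left _ _
  have hcα : c ≤ α₀ := max_le hα.le (min_le_left _ _)
  have hF : ∀ t : ℝ, eta (p - t • v₀) (p - t • v₀) = eta p p - 2*t*b + t^2 := by
    intro t; rw [eta_sub_smul, hv]; ring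
  have hcases := clamp_cases hα b
  have hmin : ∀ t : ℝ, 0 ≤ t → t ≤ α₀ →
      eta p p - 2*c*b + c^2 ≤ eta p p - 2*t*b + t^2 := by
    intro t ht0 htα
    rcases hcases with ⟨h1, h2⟩ | ⟨h1, h1', h2⟩ | ⟨h1, h2⟩ <;> rw [← hc] at h2 <;>
      rw [h2] <;> nlinarith [sq_nonneg (b - t)]
  obtain ⟨q, hq, hqlt, hq0⟩ := hp
  obtain ⟨t₁, ht₁0, ht₁α, rfl⟩ := (mem_seg_iff hα).mp hq
  have hclt : eta (p - c • v₀) (p - c • v₀) < 0 := by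
    rw [hF]
    calc eta p p - 2*c*b + c^2 ≤ eta p p - 2*t₁*b + t₁^2 := hmin t₁ ht₁0 ht₁α
    _ < 0 := by rw [← hF]; exact hqlt
  have hcfut : 0 < (p - c • v₀) 0 := by
    apply future_aux hqlt hq0 hclt
    have hdiff : (p - t₁ • v₀) - (p - c • v₀) = (c - t₁) • v₀ := by
      ext i; simp [Pi.sub_apply, Pi.smul_apply]; ring
    rw [hdiff]
    have : eta ((c - t₁) • v₀) ((c - t₁) • v₀) = (c - t₁)^2 * eta v₀ v₀ := by
      simp only [eta, Pi.smul_apply, smul_eq_mul]; ring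
    rw [this, hv]; positivity
  have hGreat : IsGreatest {L : ℝ | ∃ q ∈ seg α₀ v₀, eta (p - q) (p - q) < 0 ∧
      0 < (p - q) 0 ∧ L = Real.sqrt (-(eta (p - q) (p - q)))}
      (Real.sqrt (-(eta (p - c • v₀) (p - c • v₀)))) := by
    constructor
    · exact ⟨c • v₀, (mem_seg_iff hα).mpr ⟨c, hc0, hcα, rfl⟩, hclt, hcfut, rfl⟩
    · rintro L ⟨q, hq', hqlt', hq0', rfl⟩
      obtain ⟨t, ht0, htα, rfl⟩ := (mem_seg_iff hα).mp hq'
      apply Real.sqrt_le_sqrt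
      rw [hF t, hF c]
      linarith [hmin t ht0 htα]
  have hT : cosmoT α₀ v₀ p = Real.sqrt (-(eta (p - c • v₀) (p - c • v₀))) :=
    hGreat.csSup_eq
  refine ⟨hclt, hcfut, hT, ?_⟩
  intro t ht0 htα htlt ht0' heq
  rw [hT] at heq
  have hE : eta p p - 2*t*b + t^2 = eta p p - 2*c*b + c^2 := by
    have h1 : -(eta (p - t • v₀) (p - t • v₀)) = -(eta (p - c • v₀) (p - c • v₀)) :=
      (Real.sqrt_inj (by linarith) (by linarith)).mp heq
    rw [hF, hF] at h1; linarith
  rcases hcases with ⟨h1, h2⟩ | ⟨h1, h1', h2⟩ | ⟨h1, h2⟩ <;> rw [← hc] at h2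
  · rw [h2] at hE ⊢
    nlinarith
  · rw [h2] at hE ⊢
    nlinarith [sq_nonneg (b - t)]
  · rw [h2] at hE ⊢
    nlinarith

lemma g_eq {α₀ : ℝ} (hα : 0 < α₀) {v₀ : Fin 3 → ℝ} (hv : eta v₀ v₀ = 1) (p : Fin 3 → ℝ) :
    -(eta p p) + sqp (eta p v₀) - sqp (eta p v₀ - α₀) =
      -(eta (p - (max 0 (min α₀ (eta p v₀))) • v₀)
        (p - (max 0 (min α₀ (eta p v₀))) • v₀)) := by
  set b := eta p v₀ with hb
  rw [eta_sub_smul, hv]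
  rcases clamp_cases hα b with ⟨h1, h2⟩ | ⟨h1, h1', h2⟩ | ⟨h1, h2⟩ <;> rw [h2]
  · have e1 : sqp b = 0 := by simp [sqp, max_eq_right h1]
    have e2 : sqp (b - α₀) = 0 := by simp [sqp, max_eq_right (by linarith : b - α₀ ≤ 0)]
    rw [e1, e2]; ring
  · have e1 : sqp b = b ^ 2 := by simp [sqp, max_eq_left h1]
    have e2 : sqp (b - α₀) = 0 := by simp [sqp, max_eq_right (by linarith : b - α₀ ≤ 0)]
    rw [e1, e2]; ring
  · have e1 : sqp b = b ^ 2 := by simp [sqp, max_eq_left (hα.le.trans h1)]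
    have e2 : sqp (b - α₀) = (b - α₀) ^ 2 := by
      simp [sqp, max_eq_left (by linarith : (0:ℝ) ≤ b - α₀)]
    rw [e1, e2]; ring

/-- The future of a spacelike segment has `C¹` cosmological time `T`, for every `p`
there is a unique point `r p` of the segment realizing `T p`, and the retraction `r`
is continuous. -/
theorem cosmological_time_of_future_of_segment
    (α₀ : ℝ) (hα : 0 < α₀) (v₀ : Fin 3 → ℝ) (hv : eta v₀ v₀ = 1) :
    ContDiffOn ℝ 1 (cosmoT α₀ v₀) (U0 α₀ v₀) ∧
    ∃ r : (Fin 3 → ℝ) → (Fin 3 → ℝ), ContinuousOn r (U0 α₀ v₀) ∧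
      ∀ p ∈ U0 α₀ v₀, r p ∈ seg α₀ v₀ ∧
        eta (p - r p) (p - r p) < 0 ∧ 0 < (p - r p) 0 ∧
        Real.sqrt (-(eta (p - r p) (p - r p))) = cosmoT α₀ v₀ p ∧
        ∀ q ∈ seg α₀ v₀, eta (p - q) (p - q) < 0 → 0 < (p - q) 0 →
          Real.sqrt (-(eta (p - q) (p - q))) = cosmoT α₀ v₀ p → q = r p := by
  have hproj : ∀ i : Fin 3, ContDiff ℝ 1 (fun p : Fin 3 → ℝ => p i) := fun i =>
    contDiff_pi.mp contDiff_id i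
  have hBd : ContDiff ℝ 1 (fun p : Fin 3 → ℝ => eta p v₀) := by
    simp only [eta]
    exact (((hproj 0).mul contDiff_const).neg.add ((hproj 1).mul contDiff_const)).add
      ((hproj 2).mul contDiff_const)
  have hQd : ContDiff ℝ 1 (fun p : Fin 3 → ℝ => eta p p) := by
    simp only [eta]
    exact (((hproj 0).mul (hproj 0)).neg.add ((hproj 1).mul (hproj 1))).add
      ((hproj 2).mul (hproj 2))
  set g : (Fin 3 → ℝ) → ℝ :=
    fun p => -(eta p p) + sqp (eta p v₀) - sqp (eta p v₀ - α₀) with hg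
  have hgd : ContDiff ℝ 1 g :=
    (hQd.neg.add (contDiff_sqp.comp hBd)).sub (contDiff_sqp.comp (hBd.sub contDiff_const))
  have hgpos : ∀ p ∈ U0 α₀ v₀, 0 < g p := by
    intro p hp
    have h := (key hα hv hp).1
    rw [hg]
    simp only
    rw [g_eq hα hv p]
    linarith
  constructor
  · have h1 : ContDiffOn ℝ 1 (fun p => Real.sqrt (g p)) (U0 α₀ v₀) := fun p hp =>
      ((Real.contDiffAt_sqrt (ne_of_gt (hgpos p hp))).comp p hgd.contDiffAt).contDiffWithinAt
    refine h1.congr fun p hp => ?_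
    rw [(key hα hv hp).2.2.1]
    congr 1
    rw [hg]
    simp only
    rw [g_eq hα hv p]
  · refine ⟨fun p => (max 0 (min α₀ (eta p v₀))) • v₀, ?_, ?_⟩
    · have hBc : Continuous (fun p : Fin 3 → ℝ => eta p v₀) := hBd.continuous
      exact ((continuous_const.max (continuous_const.min hBc)).smul
        continuous_const).continuousOn
    · intro p hp
      obtain ⟨K1, K2, K3, K4⟩ := key hα hv hp
      refine ⟨(mem_seg_iff hα).mpr ⟨_, le_max_left _ _,
        max_le hα.le (min_le_left _ _), rfl⟩, K1, K2, K3.symm, ?_⟩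
      intro q hq hlt h0 heq
      obtain ⟨t, ht0, htα, rfl⟩ := (mem_seg_iff hα).mp hq
      rw [K4 t ht0 htα hlt h0 heq]
end
end

section
/- In anti-de Sitter space X_{-1}, rotations around a fixed spacelike geodesic l act freely and transitively on the dual spacelike geodesic l*, and also act freely and transitively on the set of spacelike planes containing l; consequently, for any two spacelike planes P₁, P₂ containing l, there is a unique rotation around l taking P₁ to P₂. -/
noncomputable section

open Matrix

/-- The bilinear form on `2×2` real matrices polarizing the quadratic form `-det`,
inducing the anti-de Sitter metric on the quadric `{det = 1}`. -/
def bform (A B : Matrix (Fin 2) (Fin 2) ℝ) : ℝ :=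
  -(((A + B).det - A.det - B.det) / 2)

/-- The spacelike geodesic through `P` with unit spacelike direction `V`. -/
def geo (P V : Matrix (Fin 2) (Fin 2) ℝ) (t : ℝ) : Matrix (Fin 2) (Fin 2) ℝ :=
  Real.cosh t • P + Real.sinh t • V

/-- The dual geodesic `l*` of the spacelike geodesic through `P`, `V`: the set of dual
points of the spacelike planes containing `l`, i.e. the unit quadric in the
`bform`-orthogonal complement of the span of `P` and `V`. -/
def dualGeo (P V : Matrix (Fin 2) (Fin 2) ℝ) : Set (Matrix (Fin 2) (Fin 2) ℝ) :=
  {z | z.det = 1 ∧ bform z P = 0 ∧ bform z V = 0}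

/-- The spacelike plane dual to the point `x` of the quadric. -/
def dualPlane (x : Matrix (Fin 2) (Fin 2) ℝ) : Set (Matrix (Fin 2) (Fin 2) ℝ) :=
  {z | z.det = 1 ∧ bform x z = 0}

/-- The isometry of `X₋₁` given by the pair `(g,h)`. -/
def adsAct (g h : Matrix.SpecialLinearGroup (Fin 2) ℝ)
    (z : Matrix (Fin 2) (Fin 2) ℝ) : Matrix (Fin 2) (Fin 2) ℝ :=
  (g : Matrix (Fin 2) (Fin 2) ℝ) * z *
    ((h⁻¹ : Matrix.SpecialLinearGroup (Fin 2) ℝ) : Matrix (Fin 2) (Fin 2) ℝ)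

/-- `(g,h)` is a rotation around the spacelike geodesic `l = geo P V`: it fixes `l`
pointwise (projectively). -/
def IsRot (P V : Matrix (Fin 2) (Fin 2) ℝ)
    (g h : Matrix.SpecialLinearGroup (Fin 2) ℝ) : Prop :=
  ∀ t : ℝ, adsAct g h (geo P V t) = geo P V t ∨ adsAct g h (geo P V t) = -(geo P V t)

/-- `(g,h)` acts (projectively) trivially on `X₋₁`. -/
def ProjTrivial (g h : Matrix.SpecialLinearGroup (Fin 2) ℝ) : Prop :=
  ∀ z : Matrix (Fin 2) (Fin 2) ℝ, z.det = 1 → adsAct g h z = z ∨ adsAct g h z = -z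

/-!
With `W = P⁻¹ V`, a trace-zero involution, the geodesic `l` is `t ↦ P exp (t W)` and the points
of `l*` are the `P u` with `u² = -1` and `u W = -W u`. A pair `(g, h)` fixing `l` pointwise has `h`
commuting with `W`, so `h = ±exp (c W)` and `g = ±P h P⁻¹`; it moves `P u` to `P exp (2c W) u`,
i.e. it translates `l*` by `2c`. Two points `P u₁`, `P u₂` of `l*` differ by `-u₂ u₁`, which
commutes with `W` and hence is `±exp (c₀ W)`: this gives transitivity, and `exp (2c W) = ±1` only
for `c = 0` gives freeness. A spacelike plane determines its dual point up to sign, which carries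
everything over to the planes through `l`.
-/

open scoped MatrixGroups

local notation "M₂" => Matrix (Fin 2) (Fin 2) ℝ

/-- Equality in `X₋₁ = {det = 1}/±`. -/
def EqUpToSign {α : Type*} [Neg α] (a b : α) : Prop := a = b ∨ a = -b

namespace EqUpToSign

variable {α β : Type*}

theorem symm [InvolutiveNeg α] {a b : α} (h : EqUpToSign a b) : EqUpToSign b a := by
  rcases h with rfl | rfl
  · exact Or.inl rfl
  · exact Or.inr (neg_neg b).symm

theorem trans [InvolutiveNeg α] {a b c : α} (hab : EqUpToSign a b) (hbc : EqUpToSign b c) :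
    EqUpToSign a c := by
  rcases hab with rfl | rfl <;> rcases hbc with rfl | rfl <;> simp [EqUpToSign]

theorem map [Neg α] [Neg β] {a b : α} (h : EqUpToSign a b) (f : α → β)
    (hf : ∀ x, f (-x) = -f x) : EqUpToSign (f a) (f b) := by
  rcases h with rfl | rfl
  · exact Or.inl rfl
  · exact Or.inr (hf b)

theorem map_eq [Neg α] {a b : α} (h : EqUpToSign a b) (f : α → β) (hf : ∀ x, f (-x) = f x) :
    f a = f b := by
  rcases h with rfl | rfl
  · rfl
  · exact hf b

theorem mul_left [Mul α] [HasDistribNeg α] {a b : α} (h : EqUpToSign a b) (c : α) :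
    EqUpToSign (c * a) (c * b) :=
  h.map (c * ·) (mul_neg c)

theorem mul_right [Mul α] [HasDistribNeg α] {a b : α} (h : EqUpToSign a b) (c : α) :
    EqUpToSign (a * c) (b * c) :=
  h.map (· * c) (fun x => neg_mul x c)

end EqUpToSign

section FinTwo

variable {R : Type*} [CommRing R] (A B : Matrix (Fin 2) (Fin 2) R)

theorem adjugate_fin_two_eq_trace_smul_sub : adjugate A = trace A • 1 - A := by
  ext i j
  fin_cases i <;> fin_cases j <;> simp [adjugate_fin_two, trace_fin_two]

theorem adjugate_neg_fin_two : adjugate (-A) = -adjugate A := by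
  simp only [adjugate_fin_two_eq_trace_smul_sub, trace_neg, neg_smul]
  abel

theorem mul_self_fin_two_eq : A * A = trace A • A - A.det • 1 := by
  ext i j
  fin_cases i <;> fin_cases j <;>
    simp [mul_apply, trace_fin_two, det_fin_two] <;> ring

theorem mul_add_mul_swap_fin_two_eq :
    A * B + B * A = trace A • B + trace B • A + (trace (A * B) - trace A * trace B) • 1 := by
  ext i j
  fin_cases i <;> fin_cases j <;>
    simp [mul_apply, trace_fin_two] <;> ring

theorem det_smul_one_add_smul_fin_two (a b : R) :
    (a • 1 + b • A).det = a ^ 2 + a * b * trace A + b ^ 2 * A.det := by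
  simp [det_fin_two, trace_fin_two]
  ring

end FinTwo

theorem Real.exists_cosh_sinh_eq {a b : ℝ} (h : a ^ 2 - b ^ 2 = 1) (ha : 0 ≤ a) :
    ∃ c, Real.cosh c = a ∧ Real.sinh c = b :=
  ⟨Real.arsinh b, by rw [Real.cosh_arsinh, show 1 + b ^ 2 = a ^ 2 by linarith,
    Real.sqrt_sq ha], Real.sinh_arsinh b⟩

/-- `exp (c • W)` when `W * W = 1`. -/
def hypExp (W : M₂) (c : ℝ) : M₂ := Real.cosh c • 1 + Real.sinh c • W

section HypExp

variable {W : M₂}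

theorem mul_self_eq_one_of_trace_eq_zero (htr : trace W = 0) (hdet : W.det = -1) :
    W * W = 1 := by
  simp [mul_self_fin_two_eq W, htr, hdet]

theorem hypExp_zero : hypExp W 0 = 1 := by simp [hypExp]

theorem hypExp_mul_hypExp (hW : W * W = 1) (c d : ℝ) :
    hypExp W c * hypExp W d = hypExp W (c + d) := by
  simp only [hypExp, add_mul, mul_add, smul_mul_assoc, mul_smul_comm, one_mul, mul_one, hW,
    Real.cosh_add, Real.sinh_add]
  module

theorem det_hypExp (htr : trace W = 0) (hdet : W.det = -1) (c : ℝ) : (hypExp W c).det = 1 := by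
  rw [hypExp, det_smul_one_add_smul_fin_two, htr, hdet]
  linear_combination Real.cosh_sq_sub_sinh_sq c

theorem adjugate_hypExp (htr : trace W = 0) (c : ℝ) : adjugate (hypExp W c) = hypExp W (-c) := by
  rw [adjugate_fin_two_eq_trace_smul_sub]
  simp only [hypExp, trace_add, trace_smul, trace_one, htr, Real.cosh_neg, Real.sinh_neg,
    Fintype.card_fin, smul_eq_mul]
  module

theorem trace_hypExp (htr : trace W = 0) (c : ℝ) : trace (hypExp W c) = 2 * Real.cosh c := by
  simp [hypExp, htr, mul_comm]

theorem trace_hypExp_mul_self (hW : W * W = 1) (htr : trace W = 0) (c : ℝ) :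
    trace (hypExp W c * W) = 2 * Real.sinh c := by
  simp [hypExp, add_mul, hW, htr, mul_comm]

theorem eq_zero_of_hypExp_eq_smul_one (hW : W * W = 1) (htr : trace W = 0) {c k : ℝ}
    (h : hypExp W c = k • 1) : c = 0 := by
  have h2 : 2 * Real.sinh c = 0 := by
    rw [← trace_hypExp_mul_self hW htr, h, smul_mul_assoc, one_mul, trace_smul, htr, smul_zero]
  simpa using h2

theorem eq_of_hypExp_eqUpToSign (hW : W * W = 1) (htr : trace W = 0) {c d : ℝ}
    (h : EqUpToSign (hypExp W c) (hypExp W d)) : c = d := by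
  have h' := h.mul_right (hypExp W (-d))
  rw [hypExp_mul_hypExp hW, hypExp_mul_hypExp hW, add_neg_cancel, hypExp_zero] at h'
  rw [← sub_eq_zero, sub_eq_add_neg]
  rcases h' with h' | h'
  · exact eq_zero_of_hypExp_eq_smul_one hW htr (k := 1) (by rw [h', one_smul])
  · exact eq_zero_of_hypExp_eq_smul_one hW htr (k := -1) (by rw [h', neg_one_smul])

theorem hypExp_mul_of_anticomm {u : M₂} (hu : u * W = -(W * u)) (c : ℝ) :
    hypExp W c * u = u * hypExp W (-c) := by
  simp only [hypExp, add_mul, mul_add, smul_mul_assoc, mul_smul_comm, one_mul, mul_one, hu,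
    Real.cosh_neg, Real.sinh_neg]
  module

theorem eq_smul_one_add_smul_of_commute (hW : W * W = 1) (htr : trace W = 0) {m : M₂}
    (hm : m * W = W * m) : m = (trace m / 2) • 1 + (trace (m * W) / 2) • W := by
  -- the polarized Cayley–Hamilton identity for `m` and `W`, multiplied on the left by `W`
  have key := congrArg (W * ·) (mul_add_mul_swap_fin_two_eq m W)
  simp only [hm, htr, mul_zero, sub_zero, zero_smul, add_zero, mul_add, mul_smul_comm,
    ← mul_assoc, hW, one_mul, mul_one] at key
  rw [trace_mul_comm m W]
  calc m = (1 / 2 : ℝ) • (m + m) := by module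
    _ = _ := by rw [key]; module

theorem exists_hypExp_of_commute (htr : trace W = 0) (hdet : W.det = -1) {m : M₂}
    (hm : m * W = W * m) (hdm : m.det = 1) : ∃ c, EqUpToSign m (hypExp W c) := by
  have hm' := eq_smul_one_add_smul_of_commute (mul_self_eq_one_of_trace_eq_zero htr hdet) htr hm
  set a := trace m / 2
  set b := trace (m * W) / 2
  have hab : a ^ 2 - b ^ 2 = 1 := by
    rw [← hdm, hm', det_smul_one_add_smul_fin_two, htr, hdet]
    ring
  rcases le_total 0 a with ha | ha
  · obtain ⟨c, hc, hs⟩ := Real.exists_cosh_sinh_eq hab ha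
    exact ⟨c, Or.inl (by rw [hm', hypExp, hc, hs])⟩
  · obtain ⟨c, hc, hs⟩ := Real.exists_cosh_sinh_eq (a := -a) (b := -b) (by linarith) (by linarith)
    refine ⟨c, Or.inr ?_⟩
    rw [hm', hypExp, hc, hs]
    module

end HypExp

theorem bform_eq_trace (A B : M₂) : bform A B = (trace (A * B) - trace A * trace B) / 2 := by
  simp only [bform, det_fin_two, trace_fin_two, mul_apply, Fin.sum_univ_two, Matrix.add_apply]
  ring

theorem bform_comm (A B : M₂) : bform A B = bform B A := by
  rw [bform_eq_trace, bform_eq_trace, trace_mul_comm, mul_comm (trace A)]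

theorem bform_self (A : M₂) : bform A A = -A.det := by
  simp only [bform, det_fin_two, Matrix.add_apply]
  ring

theorem bform_neg_left (A B : M₂) : bform (-A) B = -bform A B := by
  simp only [bform_eq_trace, neg_mul, trace_neg]
  ring

theorem trace_adjugate_mul (A B : M₂) : trace (adjugate A * B) = -2 * bform A B := by
  simp only [adjugate_fin_two_eq_trace_smul_sub, bform_eq_trace, sub_mul, smul_mul_assoc,
    one_mul, trace_sub, trace_smul, smul_eq_mul]
  ring

theorem bform_mul_left {Q : M₂} (hQ : Q.det = 1) (A B : M₂) :
    bform (Q * A) (Q * B) = bform A B := by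
  simp only [bform, ← mul_add, det_mul, hQ, one_mul]

theorem det_adsAct (g h : SL(2, ℝ)) (z : M₂) : (adsAct g h z).det = z.det := by
  simp only [adsAct, det_mul, Matrix.SpecialLinearGroup.det_coe, one_mul, mul_one]

theorem bform_adsAct (g h : SL(2, ℝ)) (A B : M₂) :
    bform (adsAct g h A) (adsAct g h B) = bform A B := by
  have hadd : adsAct g h A + adsAct g h B = adsAct g h (A + B) := by
    simp only [adsAct, mul_add, add_mul]
  rw [bform, bform, hadd, det_adsAct, det_adsAct, det_adsAct]

theorem adsAct_adsAct_inv (g h : SL(2, ℝ)) (z : M₂) : adsAct g h (adsAct g⁻¹ h⁻¹ z) = z := by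
  calc adsAct g h (adsAct g⁻¹ h⁻¹ z)
      = ((g * g⁻¹ : SL(2, ℝ)) : M₂) * z * ((h * h⁻¹ : SL(2, ℝ)) : M₂) := by
        simp only [adsAct, inv_inv, Matrix.SpecialLinearGroup.coe_mul, mul_assoc]
    _ = z := by simp

section Frame

variable {P V : M₂}

theorem adjugate_mul_of_det_eq_one (hP : P.det = 1) : adjugate P * P = 1 := by
  rw [adjugate_mul, hP, one_smul]

theorem mul_adjugate_of_det_eq_one (hP : P.det = 1) : P * adjugate P = 1 := by
  rw [mul_adjugate, hP, one_smul]

theorem det_adjugate_of_det_eq_one (hP : P.det = 1) : (adjugate P).det = 1 := by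
  rw [det_adjugate, hP, one_pow]

theorem trace_adjugate_mul_eq_zero {x : M₂} (hPx : bform P x = 0) :
    trace (adjugate P * x) = 0 := by
  rw [trace_adjugate_mul, hPx, mul_zero]

theorem det_adjugate_mul_of_bform_self (hP : P.det = 1) (hV : bform V V = 1) :
    (adjugate P * V).det = -1 := by
  rw [det_mul, det_adjugate_of_det_eq_one hP, one_mul, ← neg_neg V.det, ← bform_self, hV]

theorem mul_self_adjugate_mul (hP : P.det = 1) (hPV : bform P V = 0) (hV : bform V V = 1) :
    (adjugate P * V) * (adjugate P * V) = 1 :=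
  mul_self_eq_one_of_trace_eq_zero (trace_adjugate_mul_eq_zero hPV)
    (det_adjugate_mul_of_bform_self hP hV)

theorem geo_eq_mul_hypExp (hP : P.det = 1) (t : ℝ) :
    geo P V t = P * hypExp (adjugate P * V) t := by
  rw [geo, hypExp, mul_add, mul_smul_comm, mul_smul_comm, mul_one, ← mul_assoc,
    mul_adjugate_of_det_eq_one hP, one_mul]

theorem mul_self_adjugate_mul_of_mem_dualGeo (hP : P.det = 1) {x : M₂} (hx : x ∈ dualGeo P V) :
    (adjugate P * x) * (adjugate P * x) = -1 := by
  rw [mul_self_fin_two_eq, trace_adjugate_mul_eq_zero (by rw [bform_comm, hx.2.1]), det_mul,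
    det_adjugate_of_det_eq_one hP, hx.1]
  simp

theorem anticomm_of_mem_dualGeo (hP : P.det = 1) (hPV : bform P V = 0) {x : M₂}
    (hx : x ∈ dualGeo P V) :
    (adjugate P * x) * (adjugate P * V) = -((adjugate P * V) * (adjugate P * x)) := by
  have htr : trace (adjugate P * x) = 0 := trace_adjugate_mul_eq_zero (by rw [bform_comm, hx.2.1])
  have htr' : trace ((adjugate P * x) * (adjugate P * V)) = 0 := by
    have h := bform_mul_left (det_adjugate_of_det_eq_one hP) x V
    rw [hx.2.2, bform_eq_trace, htr, zero_mul, sub_zero] at h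
    linarith
  rw [eq_neg_iff_add_eq_zero, mul_add_mul_swap_fin_two_eq, htr, htr',
    trace_adjugate_mul_eq_zero hPV]
  simp

end Frame

/-- In the coordinates `z = P * u` this is `u ↦ exp (c W) * u * exp (-c W)` with `W = P⁻¹ V`. -/
def rotAct (P V : M₂) (c : ℝ) (z : M₂) : M₂ :=
  P * hypExp (adjugate P * V) c * adjugate P * z * hypExp (adjugate P * V) (-c)

section Rotations

variable {P V : M₂}

theorem rotAct_zero (hP : P.det = 1) (z : M₂) : rotAct P V 0 z = z := by
  simp [rotAct, hypExp_zero, mul_adjugate_of_det_eq_one hP]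

theorem rotAct_geo (hP : P.det = 1) (hPV : bform P V = 0) (hV : bform V V = 1) (c t : ℝ) :
    rotAct P V c (geo P V t) = geo P V t := by
  have hW := mul_self_adjugate_mul hP hPV hV
  rw [rotAct, geo_eq_mul_hypExp hP]
  calc _ = P * (hypExp (adjugate P * V) c * (adjugate P * P) * hypExp (adjugate P * V) t *
        hypExp (adjugate P * V) (-c)) := by simp only [mul_assoc]
    _ = _ := by
      rw [adjugate_mul_of_det_eq_one hP, mul_one, hypExp_mul_hypExp hW, hypExp_mul_hypExp hW,
        add_neg_cancel_comm]

theorem rotAct_of_mem_dualGeo (hP : P.det = 1) (hPV : bform P V = 0) (hV : bform V V = 1)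
    {x : M₂} (hx : x ∈ dualGeo P V) (c : ℝ) :
    rotAct P V c x = P * hypExp (adjugate P * V) (2 * c) * (adjugate P * x) := by
  calc rotAct P V c x = P * hypExp (adjugate P * V) c *
        ((adjugate P * x) * hypExp (adjugate P * V) (-c)) := by simp only [rotAct, mul_assoc]
    _ = _ := by
      rw [← hypExp_mul_of_anticomm (anticomm_of_mem_dualGeo hP hPV hx), ← mul_assoc,
        mul_assoc P, hypExp_mul_hypExp (mul_self_adjugate_mul hP hPV hV), two_mul]

theorem exists_isRot_adsAct_eq_rotAct (hP : P.det = 1) (hPV : bform P V = 0)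
    (hV : bform V V = 1) (c : ℝ) :
    ∃ g h : SL(2, ℝ), IsRot P V g h ∧ ∀ z, adsAct g h z = rotAct P V c z := by
  have htr := trace_adjugate_mul_eq_zero hPV
  have hdet := det_adjugate_mul_of_bform_self hP hV
  let E := hypExp (adjugate P * V) c
  have hg : (P * E * adjugate P).det = 1 := by
    rw [det_mul, det_mul, hP, det_hypExp htr hdet, det_adjugate_of_det_eq_one hP, one_mul, one_mul]
  have hact : ∀ z, adsAct ⟨P * E * adjugate P, hg⟩ ⟨E, det_hypExp htr hdet c⟩ z = rotAct P V c z :=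
    fun z => by
      change P * E * adjugate P * z * adjugate E = _
      rw [adjugate_hypExp htr]
      rfl
  exact ⟨_, _, fun t => Or.inl ((hact _).trans (rotAct_geo hP hPV hV c t)), hact⟩

theorem IsRot.eqUpToSign_coe_left (hP : P.det = 1) {g h : SL(2, ℝ)} (hrot : IsRot P V g h) :
    EqUpToSign (g : M₂) (P * h * adjugate P) := by
  have h0 : EqUpToSign ((g : M₂) * P * adjugate h) P := by
    simpa [EqUpToSign, geo, adsAct, Matrix.SpecialLinearGroup.coe_inv] using hrot 0
  have h1 := h0.mul_right ((h : M₂) * adjugate P)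
  rwa [mul_assoc _ (adjugate _), ← mul_assoc (adjugate _),
    adjugate_mul_of_det_eq_one h.det_coe, one_mul, mul_assoc, mul_adjugate_of_det_eq_one hP,
    mul_one, ← mul_assoc P] at h1

theorem IsRot.commute (hP : P.det = 1) (hPV : bform P V = 0)
    {g h : SL(2, ℝ)} (hrot : IsRot P V g h) :
    (h : M₂) * (adjugate P * V) = (adjugate P * V) * h := by
  set W := adjugate P * V
  set E := hypExp W 1
  have hPP := adjugate_mul_of_det_eq_one hP
  have hhh := adjugate_mul_of_det_eq_one h.det_coe
  have hconj : EqUpToSign ((h : M₂) * (E * adjugate (h : M₂))) E := by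
    have h1 := hrot 1
    have h2 := (hrot.eqUpToSign_coe_left hP).mul_right (P * (E * adjugate (h : M₂)))
    simp only [adsAct, Matrix.SpecialLinearGroup.coe_inv, geo_eq_mul_hypExp hP, mul_assoc] at h1 h2
    rw [← mul_assoc (adjugate P) P, hPP, one_mul] at h2
    have h3 := (h2.symm.trans h1).mul_left (adjugate P)
    rwa [← mul_assoc, ← mul_assoc (adjugate P), hPP, one_mul, one_mul] at h3
  have hconj' : (h : M₂) * (E * adjugate (h : M₂)) = E := by
    -- conjugation preserves the trace, and `trace E = 2 cosh 1 ≠ 0`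
    refine hconj.resolve_right fun hneg => ?_
    have htr := congrArg trace hneg
    rw [← mul_assoc, trace_mul_cycle, hhh, one_mul, trace_neg,
      trace_hypExp (trace_adjugate_mul_eq_zero hPV)] at htr
    linarith [Real.cosh_pos 1]
  have hcomm : (h : M₂) * E = E * h := by
    conv_rhs => rw [← hconj']
    rw [mul_assoc, mul_assoc, hhh, mul_one]
  simp only [E, hypExp, mul_add, add_mul, mul_smul_comm, smul_mul_assoc, mul_one, one_mul,
    add_right_inj] at hcomm
  exact smul_right_injective M₂ (Real.sinh_pos_iff.2 one_pos).ne' hcomm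

theorem IsRot.exists_rotAct (hP : P.det = 1) (hPV : bform P V = 0) (hV : bform V V = 1)
    {g h : SL(2, ℝ)} (hrot : IsRot P V g h) :
    ∃ c, ∀ z, EqUpToSign (adsAct g h z) (rotAct P V c z) := by
  obtain ⟨c, hc⟩ := exists_hypExp_of_commute (trace_adjugate_mul_eq_zero hPV)
    (det_adjugate_mul_of_bform_self hP hV) (hrot.commute hP hPV) h.det_coe
  refine ⟨c, fun z => ?_⟩
  have hrotAct : P * h * adjugate P * z * adjugate (h : M₂) = rotAct P V c z := by
    refine (hc.map_eq (fun X => P * X * adjugate P * z * adjugate X) fun X => ?_).trans ?_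
    · simp [adjugate_neg_fin_two]
    · rw [rotAct, adjugate_hypExp (trace_adjugate_mul_eq_zero hPV)]
  have := (hrot.eqUpToSign_coe_left hP).mul_right (z * adjugate (h : M₂))
  rwa [← mul_assoc, ← mul_assoc, hrotAct] at this

theorem eq_of_rotAct_eqUpToSign (hP : P.det = 1) (hPV : bform P V = 0) (hV : bform V V = 1)
    {x : M₂} (hx : x ∈ dualGeo P V) {c d : ℝ}
    (h : EqUpToSign (rotAct P V c x) (rotAct P V d x)) : c = d := by
  rw [rotAct_of_mem_dualGeo hP hPV hV hx, rotAct_of_mem_dualGeo hP hPV hV hx] at h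
  have hu := mul_self_adjugate_mul_of_mem_dualGeo hP hx
  have hcancel : ∀ X, adjugate P * (P * X * (adjugate P * x)) * -(adjugate P * x) = X := by
    intro X
    rw [show adjugate P * (P * X * (adjugate P * x)) * -(adjugate P * x) =
      -(adjugate P * P * X * ((adjugate P * x) * (adjugate P * x))) by noncomm_ring,
      adjugate_mul_of_det_eq_one hP, hu]
    simp
  have h' := (h.mul_left (adjugate P)).mul_right (-(adjugate P * x))
  rw [hcancel, hcancel] at h'
  have := eq_of_hypExp_eqUpToSign (mul_self_adjugate_mul hP hPV hV)
    (trace_adjugate_mul_eq_zero hPV) h'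
  linarith

theorem exists_rotAct_eqUpToSign (hP : P.det = 1) (hPV : bform P V = 0) (hV : bform V V = 1)
    {x₁ x₂ : M₂} (hx₁ : x₁ ∈ dualGeo P V) (hx₂ : x₂ ∈ dualGeo P V) :
    ∃ c, EqUpToSign (rotAct P V c x₁) x₂ := by
  have hu₁ := anticomm_of_mem_dualGeo hP hPV hx₁
  have hu₂ := anticomm_of_mem_dualGeo hP hPV hx₂
  have hu₁₁ := mul_self_adjugate_mul_of_mem_dualGeo hP hx₁
  set W := adjugate P * V
  set u₁ := adjugate P * x₁
  set u₂ := adjugate P * x₂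
  have hcomm : -(u₂ * u₁) * W = W * -(u₂ * u₁) :=
    calc -(u₂ * u₁) * W = -(u₂ * (u₁ * W)) := by noncomm_ring
      _ = (u₂ * W) * u₁ := by rw [hu₁]; noncomm_ring
      _ = W * -(u₂ * u₁) := by rw [hu₂]; noncomm_ring
  have hdet : (-(u₂ * u₁)).det = 1 := by
    simp [u₁, u₂, det_neg, det_mul, det_adjugate_of_det_eq_one hP, hx₁.1, hx₂.1]
  obtain ⟨c, hc⟩ := exists_hypExp_of_commute (trace_adjugate_mul_eq_zero hPV)
    (det_adjugate_mul_of_bform_self hP hV) hcomm hdet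
  refine ⟨c / 2, ?_⟩
  have hx₂' : P * -(u₂ * u₁) * u₁ = x₂ := by
    rw [show P * -(u₂ * u₁) * u₁ = -(P * u₂ * (u₁ * u₁)) by noncomm_ring, hu₁₁, mul_neg_one,
      neg_neg, ← mul_assoc, mul_adjugate_of_det_eq_one hP, one_mul]
  rw [rotAct_of_mem_dualGeo hP hPV hV hx₁, mul_div_cancel₀ c two_ne_zero, ← hx₂']
  exact (hc.symm.mul_left P).mul_right u₁

end Rotations

theorem dualPlane_neg (x : M₂) : dualPlane (-x) = dualPlane x := by
  simp [dualPlane, bform_neg_left]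

theorem adsAct_inv_adsAct (g h : SL(2, ℝ)) (z : M₂) : adsAct g⁻¹ h⁻¹ (adsAct g h z) = z := by
  simpa using adsAct_adsAct_inv g⁻¹ h⁻¹ z

theorem image_adsAct_dualPlane (g h : SL(2, ℝ)) (x : M₂) :
    adsAct g h '' dualPlane x = dualPlane (adsAct g h x) := by
  rw [Set.image_eq_preimage_of_inverse (adsAct_inv_adsAct g h) (adsAct_adsAct_inv g h)]
  ext z
  simp only [Set.mem_preimage, dualPlane, Set.mem_ofPred_eq, det_adsAct]
  rw [← bform_adsAct g h, adsAct_adsAct_inv]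

theorem eq_smul_one_of_trace_mul_eq_zero {K : M₂}
    (hK : ∀ u : M₂, trace u = 0 → u.det = 1 → trace (K * u) = 0) : K = K 0 0 • 1 := by
  have t₁ := hK !![0, 1; -1, 0] (by simp [trace_fin_two]) (by simp [det_fin_two])
  have t₂ := hK !![1, 1; -2, -1] (by simp [trace_fin_two]) (by norm_num [det_fin_two])
  have t₃ := hK !![-1, 1; -2, 1] (by simp [trace_fin_two]) (by norm_num [det_fin_two])
  simp only [trace_fin_two, mul_apply, Fin.sum_univ_two] at t₁ t₂ t₃
  norm_num at t₁ t₂ t₃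
  ext i j
  fin_cases i <;> fin_cases j <;> simp <;> linarith

theorem eqUpToSign_of_dualPlane_eq {a b : M₂} (ha : a.det = 1) (hb : b.det = 1)
    (hab : dualPlane a = dualPlane b) : EqUpToSign a b := by
  have hK : adjugate b * a = (adjugate b * a) 0 0 • 1 :=
    eq_smul_one_of_trace_mul_eq_zero fun u htr hdet => by
      have hau : a * u ∈ dualPlane b := by
        rw [← hab]
        refine ⟨by rw [det_mul, ha, hdet, one_mul], ?_⟩
        have h := bform_mul_left ha 1 u
        rw [mul_one] at h
        simp [h, bform_eq_trace, htr]
      rw [mul_assoc, trace_adjugate_mul, hau.2, mul_zero]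
  set k := (adjugate b * a) 0 0
  have ha' : a = k • b := by
    rw [← one_mul a, ← mul_adjugate_of_det_eq_one hb, mul_assoc, hK, mul_smul_comm, mul_one]
  have hk : k ^ 2 = 1 := by
    simpa [ha, hb] using (congrArg det ha').symm
  rcases sq_eq_one_iff.1 hk with hk | hk
  · exact Or.inl (by rw [ha', hk, one_smul])
  · exact Or.inr (by rw [ha', hk, neg_one_smul])

/-- Rotations around a spacelike geodesic `l` act freely and transitively on the dual
geodesic `l*` and on the spacelike planes containing `l`; consequently, for any two
spacelike planes containing `l` there is a unique rotation around `l` taking one to the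
other. -/
theorem rotations_act_freely_transitively
    (P V : Matrix (Fin 2) (Fin 2) ℝ)
    (hP : P.det = 1) (hPV : bform P V = 0) (hV : bform V V = 1) :
    -- transitivity on `l*`:
    (∀ x₁ ∈ dualGeo P V, ∀ x₂ ∈ dualGeo P V, ∃ g h,
      IsRot P V g h ∧ (adsAct g h x₁ = x₂ ∨ adsAct g h x₁ = -x₂)) ∧
    -- freeness on `l*`:
    (∀ g h, IsRot P V g h → ∀ x₁ ∈ dualGeo P V,
      (adsAct g h x₁ = x₁ ∨ adsAct g h x₁ = -x₁) → ProjTrivial g h) ∧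
    -- free transitivity on spacelike planes containing `l` (parametrized by their
    -- dual points on `l*`), with uniqueness of the rotation:
    (∀ x₁ ∈ dualGeo P V, ∀ x₂ ∈ dualGeo P V, ∃ g h,
      IsRot P V g h ∧ adsAct g h '' dualPlane x₁ = dualPlane x₂ ∧
      ∀ g' h', IsRot P V g' h' → adsAct g' h' '' dualPlane x₁ = dualPlane x₂ →
        ∀ z : Matrix (Fin 2) (Fin 2) ℝ, z.det = 1 →
          adsAct g h z = adsAct g' h' z ∨ adsAct g h z = -(adsAct g' h' z)) := by
  have reach : ∀ x₁ ∈ dualGeo P V, ∀ x₂ ∈ dualGeo P V, ∃ c g h, IsRot P V g h ∧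
      (∀ z, adsAct g h z = rotAct P V c z) ∧ EqUpToSign (adsAct g h x₁) x₂ := by
    intro x₁ hx₁ x₂ hx₂
    obtain ⟨c, hc⟩ := exists_rotAct_eqUpToSign hP hPV hV hx₁ hx₂
    obtain ⟨g, h, hrot, hact⟩ := exists_isRot_adsAct_eq_rotAct hP hPV hV c
    exact ⟨c, g, h, hrot, hact, hact x₁ ▸ hc⟩
  refine ⟨fun x₁ hx₁ x₂ hx₂ => ?_, fun g h hrot x₁ hx₁ hfix z _ => ?_,
    fun x₁ hx₁ x₂ hx₂ => ?_⟩
  · obtain ⟨c, g, h, hrot, -, hx⟩ := reach x₁ hx₁ x₂ hx₂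
    exact ⟨g, h, hrot, hx⟩
  · obtain ⟨c, hc⟩ := hrot.exists_rotAct hP hPV hV
    have hc0 : c = 0 := eq_of_rotAct_eqUpToSign hP hPV hV hx₁
      (((hc x₁).symm.trans hfix).trans (by rw [rotAct_zero hP]; exact Or.inl rfl))
    have hz := hc z
    rwa [hc0, rotAct_zero hP] at hz
  · obtain ⟨c, g, h, hrot, hact, hx⟩ := reach x₁ hx₁ x₂ hx₂
    refine ⟨g, h, hrot, by rw [image_adsAct_dualPlane, hx.map_eq dualPlane dualPlane_neg],
      fun g' h' hrot' himage z _ => ?_⟩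
    obtain ⟨c', hc'⟩ := hrot'.exists_rotAct hP hPV hV
    have hx' : EqUpToSign (adsAct g' h' x₁) x₂ := eqUpToSign_of_dualPlane_eq
      (by rw [det_adsAct, hx₁.1]) hx₂.1 (by rw [← image_adsAct_dualPlane, himage])
    have hcc : c = c' := eq_of_rotAct_eqUpToSign hP hPV hV hx₁
      ((hact x₁ ▸ hx).trans (hx'.symm.trans (hc' x₁)))
    rw [hact, hcc]
    exact (hc' z).symm
end
end
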